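/- Fix L ≥ 3 and set τ_L = √((L−1)/L). There exists a function τ(γ) = 2γ/(L²−L−2) + O(γ²) with the following property: for any L unit vectors x₁,…,x_L in a real Hilbert space with circumscribed radius rad(x) ≥ τ_L, if ⟨x₁,x₂⟩ ≥ γ ≥ 0 then some pair i ≠ j has ⟨xᵢ,xⱼ⟩ ≤ −τ(γ). -/

import Mathlib

/-!
Let `y = ∑ ωᵢ xᵢ` (with `ω` in the standard simplex) be the point of the convex hull of the `xᵢ`
nearest to the origin. The projection inequality gives `‖y‖² ≤ ⟪xᵢ, y⟫`, so every `xᵢ` lies within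
`√(1 - ‖y‖²)` of `y`, and `rad(x) ≥ τ_L` forces `‖y‖² ≤ 1/L`. If every off-diagonal inner product
were at least `-τ`, then `‖y‖² = ∑ ωᵢωⱼ⟪xᵢ, xⱼ⟫` would dominate the form of the comparison matrix
(diagonal `1`, entry `γ` at `(1,2)`, `-τ` elsewhere); by Cauchy–Schwarz on the coordinates other
than the first two, that form exceeds `1/L` on the simplex when `γ > 0` and `τ = τ(γ)`.
For `γ = 0` apply this with `γ = min ⟪x₁, x₂⟫ 1`.
-/

noncomputable def pairTau (L γ : ℝ) : ℝ := max 0 ((2 * γ - 4 * γ ^ 2) / (L ^ 2 - L - 2))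

section

variable {L γ : ℝ}

theorem abs_pairTau_sub_le (hL : 3 ≤ L) (hγ : 0 ≤ γ) :
    |pairTau L γ - 2 * γ / (L ^ 2 - L - 2)| ≤ 4 / (L ^ 2 - L - 2) * γ ^ 2 := by
  have hc : 0 < L ^ 2 - L - 2 := by nlinarith
  have h : pairTau L γ - 2 * γ / (L ^ 2 - L - 2)
      = max (-(2 * γ / (L ^ 2 - L - 2))) (-(4 / (L ^ 2 - L - 2) * γ ^ 2)) := by
    rw [pairTau, ← max_sub_sub_right]
    congr 1 <;> ring
  rw [h, abs_le]
  have hA : 0 ≤ 2 * γ / (L ^ 2 - L - 2) := by positivity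
  have hB : 0 ≤ 4 / (L ^ 2 - L - 2) * γ ^ 2 := by positivity
  exact ⟨le_max_right _ _, max_le (by linarith) (by linarith)⟩

theorem mul_div_add_le_mul_sq_add_mul_sq {a b : ℝ} (ha : 0 < a) (hb : 0 < b) (s : ℝ) :
    a * b / (a + b) ≤ a * s ^ 2 + b * (1 - s) ^ 2 := by
  rw [div_le_iff₀ (by positivity)]
  nlinarith [sq_nonneg (a * s - b * (1 - s))]

/-- Equals `2L(L-2) (ab - (1/L + τ)(a + b))` for `a = (1+γ)/2 + τ`, `b = (1+τ)/(L-2)`. -/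
theorem pairTau_gap_pos (hL : 3 ≤ L) (hγ : 0 < γ) :
    0 < 2 * γ - (L ^ 2 - L - 2) * pairTau L γ - L * (L - 3) * γ * pairTau L γ
      - 2 * L * (L - 2) * pairTau L γ ^ 2 := by
  set τ := pairTau L γ
  set c := L ^ 2 - L - 2
  have hc : 4 ≤ c := by nlinarith
  rcases le_total ((2 * γ - 4 * γ ^ 2) / c) 0 with h | h
  · simp [show τ = 0 from max_eq_left h, hγ]
  have hτ : c * τ = 2 * γ - 4 * γ ^ 2 := by
    rw [show τ = _ from max_eq_right h, mul_div_cancel₀ _ (by positivity)]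
  -- so `2γ - cτ = 4γ²`, which beats the remaining terms since `cτ ≤ 2γ`
  have hτ0 : 0 ≤ c * τ := mul_nonneg (by linarith) (le_max_left _ _)
  have hτγ : c * τ ≤ 2 * γ := by nlinarith
  have hP : 8 * L * (L - 2) < 2 * c * (L ^ 2 + L - 4) := by nlinarith
  have hE : 0 < c ^ 2 * (4 * γ ^ 2 - L * (L - 3) * γ * τ - 2 * L * (L - 2) * τ ^ 2) := by
    have h1 : L * (L - 3) * γ * c * (c * τ) ≤ L * (L - 3) * γ * c * (2 * γ) :=
      mul_le_mul_of_nonneg_left hτγ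
        (mul_nonneg (mul_nonneg (mul_nonneg (by linarith) (by linarith)) hγ.le) (by linarith))
    have h2 : (c * τ) ^ 2 ≤ (2 * γ) ^ 2 := pow_le_pow_left₀ hτ0 hτγ 2
    nlinarith [mul_le_mul_of_nonneg_left h2 (by nlinarith : 0 ≤ 2 * L * (L - 2)),
      mul_lt_mul_of_pos_left hP (by positivity : 0 < γ ^ 2)]
  nlinarith [pos_of_mul_pos_right hE (by positivity)]

theorem one_div_add_pairTau_lt (hL : 3 ≤ L) (hγ : 0 < γ) :
    1 / L + pairTau L γ < ((1 + γ) / 2 + pairTau L γ) * ((1 + pairTau L γ) / (L - 2)) /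
      ((1 + γ) / 2 + pairTau L γ + (1 + pairTau L γ) / (L - 2)) := by
  have hgap := pairTau_gap_pos hL hγ
  set τ := pairTau L γ
  have hτ0 : 0 ≤ τ := le_max_left _ _
  have hL2 : 0 < L - 2 := by linarith
  have key : 2 * (L - 2) * L * (((1 + γ) / 2 + τ) * ((1 + τ) / (L - 2))
      - (1 / L + τ) * ((1 + γ) / 2 + τ + (1 + τ) / (L - 2)))
      = 2 * γ - (L ^ 2 - L - 2) * τ - L * (L - 3) * γ * τ - 2 * L * (L - 2) * τ ^ 2 := by
    field_simp
    ring
  rw [lt_div_iff₀ (by positivity)]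
  nlinarith [pos_of_mul_pos_right (key ▸ hgap) (by positivity)]

theorem one_div_lt_of_sq_one_sub_add_le (hL : 3 ≤ L) (hγ0 : 0 < γ) (hγ1 : γ ≤ 1) {u v q : ℝ}
    (hq : (1 - (u + v)) ^ 2 ≤ (L - 2) * (q - u ^ 2 - v ^ 2)) :
    1 / L < (1 + pairTau L γ) * q + 2 * (γ + pairTau L γ) * (u * v) - pairTau L γ := by
  have hlt := one_div_add_pairTau_lt hL hγ0
  set τ := pairTau L γ
  have hτ0 : 0 ≤ τ := le_max_left _ _
  have hL2 : 0 < L - 2 := by linarith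
  have hpair :
      ((1 + γ) / 2 + τ) * (u + v) ^ 2 ≤ (1 + τ) * (u ^ 2 + v ^ 2) + 2 * (γ + τ) * (u * v) := by
    nlinarith [mul_nonneg (sub_nonneg.2 hγ1) (sq_nonneg (u - v))]
  have hrest : (1 + τ) / (L - 2) * (1 - (u + v)) ^ 2 ≤ (1 + τ) * (q - u ^ 2 - v ^ 2) := by
    rw [div_mul_eq_mul_div, div_le_iff₀ hL2]
    nlinarith [mul_le_mul_of_nonneg_left hq (by linarith : 0 ≤ 1 + τ)]
  have := mul_div_add_le_mul_sq_add_mul_sq (by positivity : 0 < (1 + γ) / 2 + τ)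
    (by positivity : 0 < (1 + τ) / (L - 2)) (u + v)
  linarith

end

open Finset
open scoped RealInnerProductSpace

theorem sq_one_sub_add_le_card_sub_two_mul {ι : Type*} [Fintype ι] {ω : ι → ℝ}
    (hω : ∑ i, ω i = 1) {i₀ i₁ : ι} (h : i₀ ≠ i₁) :
    (1 - (ω i₀ + ω i₁)) ^ 2 ≤ (Fintype.card ι - 2) * (∑ i, ω i ^ 2 - ω i₀ ^ 2 - ω i₁ ^ 2) := by
  classical
  have hsub : ({i₀, i₁} : Finset ι) ⊆ univ := subset_univ _
  have hcs := sq_sum_le_card_mul_sum_sq (s := univ \ {i₀, i₁}) (f := ω)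
  rw [sum_sdiff_eq_sub hsub, sum_sdiff_eq_sub hsub, sum_pair h, sum_pair h, hω,
    card_sdiff_of_subset hsub, card_pair h, card_univ] at hcs
  have h2 : 2 ≤ Fintype.card ι := by
    simpa [card_pair h] using card_le_univ ({i₀, i₁} : Finset ι)
  rw [Nat.cast_sub h2] at hcs
  push_cast at hcs
  linarith

variable {ι E : Type*} [NormedAddCommGroup E] [InnerProductSpace ℝ E]

noncomputable def circumradius (x : ι → E) : ℝ := ⨅ y : E, ⨆ i, ‖x i - y‖

theorem circumradius_le_sqrt_one_sub_norm_sq [Nonempty ι] {x : ι → E} (hx : ∀ i, ‖x i‖ = 1)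
    {y : E} (hy : ∀ i, ‖y‖ ^ 2 ≤ ⟪x i, y⟫) : circumradius x ≤ √(1 - ‖y‖ ^ 2) := by
  refine (ciInf_le ⟨0, ?_⟩ y).trans (ciSup_le fun i => Real.le_sqrt_of_sq_le ?_)
  · rintro _ ⟨z, rfl⟩
    exact Real.iSup_nonneg fun i => norm_nonneg _
  · rw [norm_sub_sq_real, hx i]
    linarith [hy i]

variable [Fintype ι]

theorem exists_mem_stdSimplex_norm_sq_le_inner [Nonempty ι] (x : ι → E) :
    ∃ ω ∈ stdSimplex ℝ ι, ∀ i, ‖∑ j, ω j • x j‖ ^ 2 ≤ ⟪x i, ∑ j, ω j • x j⟫ := by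
  classical
  -- `y` is the projection of `0` onto the convex hull `K` of the `xᵢ`
  set f := Fintype.linearCombination ℝ x
  set K := f '' stdSimplex ℝ ι
  have hK : Convex ℝ K := (convex_stdSimplex ℝ ι).linear_image f
  have hKc : IsComplete K :=
    ((isCompact_stdSimplex ℝ ι).image f.continuous_of_finiteDimensional).isComplete
  obtain ⟨_, ⟨ω, hω, rfl⟩, hmin⟩ := exists_norm_eq_iInf_of_complete_convex
    (Set.Nonempty.image f ⟨_, single_mem_stdSimplex ℝ (Classical.arbitrary ι)⟩) hKc hK 0
  refine ⟨ω, hω, fun i => ?_⟩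
  have hxi : x i ∈ K := ⟨_, single_mem_stdSimplex ℝ i, by simp [f]⟩
  have := (norm_eq_iInf_iff_real_inner_le_zero hK ⟨ω, hω, rfl⟩).1 hmin _ hxi
  simp only [f, Fintype.linearCombination_apply, zero_sub, inner_neg_left, inner_sub_right,
    real_inner_self_eq_norm_sq] at this
  rw [real_inner_comm]
  linarith

theorem norm_sum_smul_sq (x : ι → E) (ω : ι → ℝ) :
    ‖∑ i, ω i • x i‖ ^ 2 = ∑ i, ∑ j, ω i * ω j * ⟪x i, x j⟫ := by
  simp only [← real_inner_self_eq_norm_sq, sum_inner, inner_sum, real_inner_smul_left,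
    real_inner_smul_right]
  exact sum_congr rfl fun i _ => sum_congr rfl fun j _ => by rw [real_inner_comm]; ring

theorem sum_diag_add_add_le_sum_sum [DecidableEq ι] {f : ι → ι → ℝ}
    (hf : ∀ i j, i ≠ j → 0 ≤ f i j) {i₀ i₁ : ι} (h : i₀ ≠ i₁) :
    ∑ i, f i i + f i₀ i₁ + f i₁ i₀ ≤ ∑ i, ∑ j, f i j := by
  have hdisj : Disjoint (univ.image fun i => (i, i)) {(i₀, i₁), (i₁, i₀)} := by
    simp [h, h.symm]
  rw [← sum_product' (f := f)]
  calc ∑ i, f i i + f i₀ i₁ + f i₁ i₀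
      = ∑ p ∈ (univ.image fun i => (i, i)) ∪ {(i₀, i₁), (i₁, i₀)}, f p.1 p.2 := by
        rw [sum_union hdisj, sum_image fun _ _ _ _ hab => congrArg Prod.fst hab,
          sum_pair (by simp [h]), add_assoc]
    _ ≤ ∑ p ∈ univ ×ˢ univ, f p.1 p.2 :=
        sum_le_sum_of_subset_of_nonneg (subset_univ _) fun p _ hp => hf _ _ fun hp' =>
          hp (mem_union_left _ (mem_image.2 ⟨p.1, mem_univ _, by ext <;> simp [hp']⟩))

theorem comparisonForm_le_norm_sq_sum_smul {x : ι → E} (hx : ∀ i, ‖x i‖ = 1) {ω : ι → ℝ}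
    (hω : ω ∈ stdSimplex ℝ ι) {i₀ i₁ : ι} (h : i₀ ≠ i₁) {γ τ : ℝ} (hγ : γ ≤ ⟪x i₀, x i₁⟫)
    (hτ : ∀ i j, i ≠ j → -τ ≤ ⟪x i, x j⟫) :
    (1 + τ) * ∑ i, ω i ^ 2 + 2 * (γ + τ) * (ω i₀ * ω i₁) - τ ≤ ‖∑ i, ω i • x i‖ ^ 2 := by
  classical
  have hdiag : ∀ i, ⟪x i, x i⟫ = 1 := fun i => by rw [real_inner_self_eq_norm_sq, hx i, one_pow]
  have hshift : ∑ i, ∑ j, ω i * ω j * ⟪x i, x j⟫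
      = ∑ i, ∑ j, ω i * ω j * (⟪x i, x j⟫ + τ) - τ := by
    simp only [mul_add, sum_add_distrib, ← sum_mul, ← mul_sum, hω.2]
    ring
  have hsum := sum_diag_add_add_le_sum_sum (f := fun i j => ω i * ω j * (⟪x i, x j⟫ + τ))
    (fun i j hij => mul_nonneg (mul_nonneg (hω.1 i) (hω.1 j)) (by linarith [hτ i j hij])) h
  simp only [hdiag, real_inner_comm (x i₀) (x i₁), ← sq, ← sum_mul] at hsum
  rw [norm_sum_smul_sq, hshift]
  nlinarith [mul_le_mul_of_nonneg_left hγ (mul_nonneg (hω.1 i₀) (hω.1 i₁))]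

theorem exists_inner_lt_neg_pairTau (hcard : 3 ≤ Fintype.card ι) {x : ι → E}
    (hx : ∀ i, ‖x i‖ = 1)
    (hrad : √(((Fintype.card ι : ℝ) - 1) / Fintype.card ι) ≤ circumradius x)
    {i₀ i₁ : ι} (h : i₀ ≠ i₁) {γ : ℝ} (hγ0 : 0 < γ) (hγ1 : γ ≤ 1) (hγ : γ ≤ ⟪x i₀, x i₁⟫) :
    ∃ i j, i ≠ j ∧ ⟪x i, x j⟫ < -pairTau (Fintype.card ι) γ := by
  by_contra! hτ
  have hn : (3 : ℝ) ≤ Fintype.card ι := by exact_mod_cast hcard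
  set n : ℝ := (Fintype.card ι : ℝ)
  have : Nonempty ι := ⟨i₀⟩
  obtain ⟨ω, hω, hy⟩ := exists_mem_stdSimplex_norm_sq_le_inner x
  have hsmall : ‖∑ i, ω i • x i‖ ^ 2 ≤ 1 / n := by
    have hle := hrad.trans (circumradius_le_sqrt_one_sub_norm_sq hx hy)
    rw [Real.sqrt_le_sqrt_iff' (div_pos (by linarith) (by linarith))] at hle
    have : (n - 1) / n = 1 - 1 / n := by field_simp
    linarith
  have hq := sq_one_sub_add_le_card_sub_two_mul hω.2 h
  linarith [comparisonForm_le_norm_sq_sum_smul hx hω h hγ hτ,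
    one_div_lt_of_sq_one_sub_add_le hn hγ0 hγ1 hq]

/-- for `L ≥ 3` there is a nonnegative function
`τ(γ) = 2γ/(L²-L-2) + O(γ²)` on `[0,1]` such that any `L`-tuple of unit vectors
with circumscribed radius at least `τ_L = √((L-1)/L)` and `⟨x₁,x₂⟩ ≥ γ ≥ 0` has
some pair with inner product at most `-τ(γ)`. -/
theorem stmt_17 (L : ℕ) (hL : 3 ≤ L) :
    ∃ τ : ℝ → ℝ, (∀ γ, 0 ≤ τ γ) ∧
      (∃ K : ℝ, ∀ γ ∈ Set.Icc (0 : ℝ) 1,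
        |τ γ - 2 * γ / ((L : ℝ) ^ 2 - L - 2)| ≤ K * γ ^ 2) ∧
      ∀ (E : Type) [NormedAddCommGroup E] [InnerProductSpace ℝ E]
        (x : Fin L → E), (∀ i, ‖x i‖ = 1) →
        Real.sqrt (((L : ℝ) - 1) / L) ≤ (⨅ y : E, ⨆ i, ‖x i - y‖) →
        ∀ γ : ℝ, 0 ≤ γ → γ ≤ 1 →
        γ ≤ ⟪x ⟨0, by omega⟩, x ⟨1, by omega⟩⟫ →
        ∃ i j, i ≠ j ∧ ⟪x i, x j⟫ ≤ -τ γ := by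
  have hL' : (3 : ℝ) ≤ L := by exact_mod_cast hL
  refine ⟨pairTau L, fun γ => le_max_left _ _,
    ⟨4 / ((L : ℝ) ^ 2 - L - 2), fun γ hγ => abs_pairTau_sub_le hL' hγ.1⟩, ?_⟩
  intro E _ _ x hx hrad γ hγ0 hγ1 hγ
  have h01 : (⟨0, by omega⟩ : Fin L) ≠ ⟨1, by omega⟩ := by simp
  have key : ∀ {γ'}, 0 < γ' → γ' ≤ 1 → γ' ≤ ⟪x ⟨0, by omega⟩, x ⟨1, by omega⟩⟫ →
      ∃ i j, i ≠ j ∧ ⟪x i, x j⟫ < -pairTau L γ' := fun h0 h1 h => by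
    simpa using exists_inner_lt_neg_pairTau (by simpa using hL) hx
      (by rw [Fintype.card_fin]; exact hrad) h01 h0 h1 h
  rcases hγ0.eq_or_lt with rfl | hγpos
  · rw [show pairTau L 0 = 0 by simp [pairTau], neg_zero]
    by_cases hx01 : ⟪x ⟨0, by omega⟩, x ⟨1, by omega⟩⟫ ≤ 0
    · exact ⟨_, _, h01, hx01⟩
    obtain ⟨i, j, hij, hlt⟩ :=
      key (lt_min (not_le.1 hx01) one_pos) (min_le_right _ _) (min_le_left _ _)
    exact ⟨i, j, hij, hlt.le.trans (neg_nonpos.2 (le_max_left _ _))⟩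
  · obtain ⟨i, j, hij, hlt⟩ := key hγpos hγ1 hγ
    exact ⟨i, j, hij, hlt.le⟩
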